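/- arXiv:2111.02749 — 3 statements merged into one kernel-verified Lean document; each statement's English description precedes it below -/
import Mathlib

section
/- Suppose a binary classification problem satisfies the Tsybakov noise condition: there exist a ∈ (0,1) and B > 0 such that Pr_x[|η(x) − 1/2| < 2t] ≤ B·t^{a/(1−a)} for all t ≥ 0. Then for every classifier g, Pr_x[g(x) ≠ g*(x)] ≤ C_{a,B} · (L(g) − L(g*))^a, where C_{a,B} = B^{1−a} / ((1−a)^{1−a} a^a). -/
/-!
The excess risk `L(g) - L(g*)` is `E = ∫_D |2η - 1|`, where `D` is the set on which `g`
disagrees with the Bayes classifier. Markov's inequality on `D` at level `|2η - 1| ≥ 4t`,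
combined with the noise condition on the complementary level set, gives
`Pr[D] ≤ B t^(a/(1-a)) + E/t` for every `t > 0`; the minimum over `t`, attained at
`t = ((1-a) E / (a B))^(1-a)`, is exactly `C_{a,B} E^a`.
-/

open Set Filter Topology MeasureTheory

theorem le_mul_rpow_of_forall_le_add_div {m a B E : ℝ} (ha : a ∈ Ioo 0 1) (hB : 0 < B)
    (hE : 0 ≤ E) (h : ∀ t, 0 < t → m ≤ B * t ^ (a / (1 - a)) + E / t) :
    m ≤ B ^ (1 - a) / ((1 - a) ^ (1 - a) * a ^ a) * E ^ a := by
  obtain ⟨ha0, ha1⟩ := ha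
  have ha1' : 0 < 1 - a := sub_pos.2 ha1
  rcases hE.eq_or_lt with rfl | hE
  · rw [Real.zero_rpow ha0.ne', mul_zero]
    have hlim : Tendsto (fun t : ℝ => B * t ^ (a / (1 - a))) (𝓝[>] 0) (𝓝 0) := by
      have := ((Real.continuousAt_rpow_const 0 (a / (1 - a))
        (Or.inr (div_pos ha0 ha1').le)).tendsto.const_mul B).mono_left
          (nhdsWithin_le_nhds (s := Ioi 0))
      simpa [Real.zero_rpow (div_pos ha0 ha1').ne'] using this
    exact ge_of_tendsto hlim (eventually_nhdsWithin_of_forall fun t ht => by simpa using h t ht)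
  · set u := (1 - a) * E / (a * B) with hu_def
    have hu : 0 < u := by positivity
    have hpow : (u ^ (1 - a)) ^ (a / (1 - a)) = u ^ a := by
      rw [← Real.rpow_mul hu.le]
      congr 1
      field_simp
    have hua : u ^ a = (1 - a) ^ a * E ^ a / (a ^ a * B ^ a) := by
      rw [hu_def, Real.div_rpow (by positivity) (by positivity), Real.mul_rpow ha1'.le hE.le,
        Real.mul_rpow ha0.le hB.le]
    convert h _ (Real.rpow_pos_of_pos hu (1 - a)) using 1
    rw [hpow, Real.rpow_sub hu, Real.rpow_sub hB, Real.rpow_sub ha1', Real.rpow_one,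
      Real.rpow_one, Real.rpow_one, hua, hu_def]
    field_simp
    ring

section

variable {X : Type*} [MeasurableSpace X] {μ : Measure X} [IsFiniteMeasure μ]

theorem measureReal_le_measureReal_lt_add_setIntegral_div {f : X → ℝ} {D : Set X}
    (hf : ∀ x, 0 ≤ f x) (hfi : IntegrableOn f D μ) {s : ℝ} (hs : 0 < s) :
    μ.real D ≤ μ.real {x | f x < s} + (∫ x in D, f x ∂μ) / s := by
  have markov : s * μ.real (D ∩ {x | s ≤ f x}) ≤ ∫ x in D, f x ∂μ := by
    refine le_trans ?_ (mul_meas_ge_le_integral_of_nonneg (ae_of_all _ hf) hfi s)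
    gcongr
    rw [inter_comm]
    exact ENNReal.toReal_mono (measure_ne_top _ _) (Measure.le_restrict_apply _ _)
  have cover : D ⊆ {x | f x < s} ∪ (D ∩ {x | s ≤ f x}) := fun x hx =>
    (lt_or_ge (f x) s).imp id (fun h => ⟨hx, h⟩)
  calc μ.real D ≤ μ.real {x | f x < s} + μ.real (D ∩ {x | s ≤ f x}) :=
        (measureReal_mono cover).trans (measureReal_union_le _ _)
    _ ≤ μ.real {x | f x < s} + (∫ x in D, f x ∂μ) / s := by
        gcongr
        rw [le_div_iff₀ hs]
        linarith

theorem integral_ite_sub_integral_bayes_eq_setIntegral_abs {η : X → ℝ} (hη : Measurable η)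
    (hη01 : ∀ x, η x ∈ Icc (0 : ℝ) 1) {g : X → Bool} (hg : Measurable g) :
    (∫ x, (if g x then 1 - η x else η x) ∂μ) -
        (∫ x, (if (1 / 2 : ℝ) ≤ η x then 1 - η x else η x) ∂μ) =
      ∫ x in {x | ¬(g x = true ↔ (1 / 2 : ℝ) ≤ η x)}, |2 * η x - 1| ∂μ := by
  have integrable {f : X → ℝ} (hf : Measurable f) (hf1 : ∀ x, f x ∈ Icc (0 : ℝ) 1) :
      Integrable f μ :=
    .of_bound hf.aestronglyMeasurable 1 <| ae_of_all _ fun x => by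
      rw [Real.norm_of_nonneg (hf1 x).1]; exact (hf1 x).2
  rw [← integral_sub, ← integral_indicator (by measurability)]
  · congr 1 with x
    simp only [Set.indicator_apply, Set.mem_ofPred_eq]
    split_ifs <;> grind
  · exact integrable (.ite (hg (measurableSet_singleton true)) (measurable_const.sub hη) hη)
      fun x => by split_ifs <;> simp_all
  · exact integrable (.ite (measurableSet_le measurable_const hη) (measurable_const.sub hη) hη)
      fun x => by split_ifs <;> simp_all

end

/-- Under the Tsybakov noise condition with parameters `a ∈ (0,1)` and `B > 0`
(`Pr_x[|η(x) − 1/2| < 2t] ≤ B·t^{a/(1−a)}` for all `t ≥ 0`), every classifier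
`g` satisfies `Pr_x[g(x) ≠ g*(x)] ≤ C_{a,B}·(L(g) − L(g*))^a`, where
`C_{a,B} = B^{1−a}/((1−a)^{1−a} a^a)`, `g*(x) = 1{η(x) ≥ 1/2}` is the Bayes
classifier and `L(g) = E[1{g=1}(1−η) + 1{g=0}η]` is the risk. -/
theorem tsybakov_disagreement_bound {X : Type*} [MeasurableSpace X]
    (μ : Measure X) [IsProbabilityMeasure μ]
    (η : X → ℝ) (hη : Measurable η) (hη01 : ∀ x, η x ∈ Set.Icc (0 : ℝ) 1)
    (a B : ℝ) (ha : a ∈ Set.Ioo (0 : ℝ) 1) (hB : 0 < B)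
    (htsy : ∀ t : ℝ, 0 ≤ t →
      (μ {x | |η x - 1 / 2| < 2 * t}).toReal ≤ B * t ^ (a / (1 - a)))
    (g : X → Bool) (hg : Measurable g) :
    (μ {x | ¬(g x = true ↔ (1 / 2 : ℝ) ≤ η x)}).toReal ≤
      (B ^ (1 - a) / ((1 - a) ^ (1 - a) * a ^ a)) *
        ((∫ x, (if g x then 1 - η x else η x) ∂μ) -
          (∫ x, (if (1 / 2 : ℝ) ≤ η x then 1 - η x else η x) ∂μ)) ^ a := by
  set D := {x | ¬(g x = true ↔ (1 / 2 : ℝ) ≤ η x)}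
  rw [integral_ite_sub_integral_bayes_eq_setIntegral_abs hη hη01 hg]
  have hmargin (x : X) : |2 * η x - 1| = 2 * |η x - 1 / 2| := by
    rw [show 2 * η x - 1 = 2 * (η x - 1 / 2) by ring, abs_mul, abs_two]
  have hint : IntegrableOn (fun x => |2 * η x - 1|) D μ := by
    refine .of_bound (measure_lt_top μ D) (by fun_prop) 1 (ae_of_all _ fun x => ?_)
    obtain ⟨h0, h1⟩ := hη01 x
    rw [Real.norm_eq_abs, abs_abs, abs_le]; constructor <;> linarith
  refine le_mul_rpow_of_forall_le_add_div ha hB (by positivity) fun t ht => ?_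
  calc μ.real D
      ≤ μ.real {x | |2 * η x - 1| < 4 * t} + (∫ x in D, |2 * η x - 1| ∂μ) / (4 * t) :=
        measureReal_le_measureReal_lt_add_setIntegral_div (fun _ => abs_nonneg _) hint
          (by positivity)
    _ ≤ B * t ^ (a / (1 - a)) + (∫ x in D, |2 * η x - 1| ∂μ) / t := by
        gcongr
        · have hlevel : {x | |2 * η x - 1| < 4 * t} = {x | |η x - 1 / 2| < 2 * t} := by
            ext x
            simp only [Set.mem_ofPred_eq, hmargin]
            constructor <;> intro h <;> linarith
          rw [hlevel]
          exact htsy t ht.le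
        · linarith
end

section
/- Let p : [k] × [k] → (0,1) with p_{ji} = 1 − p_{ij} and p_{ij} ≠ 1/2 for i ≠ j, satisfying strict stochastic transitivity. Let Σ be a random permutation in S_k such that Pr[Σ(i) < Σ(j)] = p_{ij} for all i ≠ j. Then the permutation σ* defined by σ*(i) = 1 + Σ_{j≠i} 1{p_{ij} < 1/2} is the unique minimizer over S_k of the expected Kendall tau distance E[d_KT(σ, Σ)]. -/
/-- Kendall tau distance on `S_k`: number of discordant pairs. -/
def dKT {k : ℕ} (π σ : Equiv.Perm (Fin k)) : ℕ :=
  ((Finset.univ : Finset (Fin k × Fin k)).filter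
    (fun p => p.1 < p.2 ∧ ((π p.1 < π p.2) ↔ (σ p.2 < σ p.1)))).card

/-- Under strict stochastic transitivity, the Copeland permutation
`σ*(i) = 1 + Σ_{j≠i} 1{p_{ij} < 1/2}` is the unique minimizer over `S_k` of the
expected Kendall tau distance `E[d_KT(σ, Σ)]`, where `Σ` is a random
permutation (distribution `w`) with `Pr[Σ(i) < Σ(j)] = p_{ij}` for `i ≠ j`.
(Here positions are 0-indexed, so `σ*(i)` corresponds to `(σ₀ i : ℕ) + 1`.) -/
theorem copeland_unique_kemeny_median {k : ℕ} (p : Fin k → Fin k → ℝ)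
    (hrange : ∀ i j, p i j ∈ Set.Ioo (0 : ℝ) 1)
    (hanti : ∀ i j, p j i = 1 - p i j)
    (hne : ∀ i j, i ≠ j → p i j ≠ 1 / 2)
    (hsst : ∀ i u j, 1 / 2 < p i u → 1 / 2 < p u j → 1 / 2 < p i j)
    (w : Equiv.Perm (Fin k) → ℝ) (hw : ∀ τ, 0 ≤ w τ) (hw1 : ∑ τ, w τ = 1)
    (hmarg : ∀ i j : Fin k, i ≠ j →
      ∑ τ, w τ * (if τ i < τ j then (1 : ℝ) else 0) = p i j)
    (σ₀ : Equiv.Perm (Fin k))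
    (hσ₀ : ∀ i : Fin k,
      (σ₀ i : ℕ) = (Finset.univ.filter (fun j => j ≠ i ∧ p i j < 1 / 2)).card) :
    ∀ σ : Equiv.Perm (Fin k), σ ≠ σ₀ →
      ∑ τ, w τ * (dKT σ₀ τ : ℝ) < ∑ τ, w τ * (dKT σ τ : ℝ) := by
  intro σ hσ
  have hhalf : ∀ i, p i i = 1 / 2 := fun i => by have := hanti i i; linarith
  -- the Copeland permutation orders according to p
  have horder : ∀ i j, 1 / 2 < p i j → σ₀ i < σ₀ j := by
    intro i j hpij
    have hij : i ≠ j := fun h => by rw [h, hhalf] at hpij; linarith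
    have : (σ₀ i : ℕ) < (σ₀ j : ℕ) := by
      rw [hσ₀ i, hσ₀ j]
      apply Finset.card_lt_card
      constructor
      · intro l hl
        simp only [Finset.mem_filter, Finset.mem_univ, true_and] at hl ⊢
        obtain ⟨hli, hpil⟩ := hl
        have hlj : l ≠ j := fun h => by rw [h] at hpil; linarith
        have h1 : 1 / 2 < p l i := by have := hanti i l; linarith
        have h2 : 1 / 2 < p l j := hsst l i j h1 hpij
        exact ⟨hlj, by have := hanti l j; linarith⟩
      · intro hsub
        have hi : i ∈ Finset.univ.filter (fun l => l ≠ j ∧ p j l < 1 / 2) := by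
          simp only [Finset.mem_filter, Finset.mem_univ, true_and]
          exact ⟨hij, by have := hanti i j; linarith⟩
        have := hsub hi
        simp at this
    exact this
  have hiff : ∀ i j, i ≠ j → (σ₀ i < σ₀ j ↔ 1 / 2 < p i j) := by
    intro i j hij
    constructor
    · intro h
      by_contra hcon
      have hlt : p i j < 1 / 2 := lt_of_le_of_ne (not_lt.mp hcon) (hne i j hij)
      have : σ₀ j < σ₀ i := horder j i (by have := hanti i j; linarith)
      exact absurd h (not_lt.mpr this.le)
    · exact horder i j
  -- rewrite the objective as a sum over pairs
  set S : Finset (Fin k × Fin k) :=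
    Finset.univ.filter (fun q : Fin k × Fin k => q.1 < q.2) with hS
  have key : ∀ σ' : Equiv.Perm (Fin k),
      ∑ τ, w τ * (dKT σ' τ : ℝ)
        = ∑ q ∈ S, (if σ' q.1 < σ' q.2 then 1 - p q.1 q.2 else p q.1 q.2) := by
    intro σ'
    have hd : ∀ τ : Equiv.Perm (Fin k), (dKT σ' τ : ℝ)
        = ∑ q ∈ S, (if (σ' q.1 < σ' q.2 ↔ τ q.2 < τ q.1) then (1 : ℝ) else 0) := by
      intro τ
      rw [dKT, Finset.card_filter]
      push_cast
      rw [hS, Finset.sum_filter]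
      apply Finset.sum_congr rfl
      intro q _
      by_cases h1 : q.1 < q.2 <;> simp [h1, ite_and]
    simp_rw [hd, Finset.mul_sum]
    rw [Finset.sum_comm]
    apply Finset.sum_congr rfl
    intro q hq
    have hq12 : q.1 ≠ q.2 := ne_of_lt (Finset.mem_filter.mp hq).2
    by_cases hA : σ' q.1 < σ' q.2
    · have he : ∀ τ : Equiv.Perm (Fin k),
          ((σ' q.1 < σ' q.2 ↔ τ q.2 < τ q.1)) = (τ q.2 < τ q.1) := by
        intro τ; simp [hA]
      simp_rw [he]
      rw [hmarg q.2 q.1 hq12.symm, if_pos hA, hanti q.1 q.2]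
    · have he : ∀ τ : Equiv.Perm (Fin k),
          ((σ' q.1 < σ' q.2 ↔ τ q.2 < τ q.1)) = (τ q.1 < τ q.2) := by
        intro τ
        have hτ : τ q.1 ≠ τ q.2 := fun h => hq12 (τ.injective h)
        have : ¬ (τ q.2 < τ q.1) ↔ τ q.1 < τ q.2 := by
          constructor
          · intro h; exact lt_of_le_of_ne (not_lt.mp h) hτ
          · intro h; exact not_lt.mpr h.le
        simp only [eq_iff_iff]
        tauto
      simp_rw [he]
      rw [hmarg q.1 q.2 hq12, if_neg hA]
  rw [key σ, key σ₀]
  -- find a pair where σ and σ₀ disagree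
  have hex : ∃ i j : Fin k, i < j ∧ ¬ ((σ i < σ j) ↔ (σ₀ i < σ₀ j)) := by
    by_contra hcon
    push_neg at hcon
    apply hσ
    have hall : ∀ i j : Fin k, σ₀ i < σ₀ j → σ i < σ j := by
      intro i j h
      rcases lt_trichotomy i j with h1 | h1 | h1
      · exact (hcon i j h1).mpr h
      · rw [h1] at h; exact absurd h (lt_irrefl _)
      · have := hcon j i h1
        have hne2 : σ i ≠ σ j := fun he => (ne_of_lt h) (congrArg σ₀ (σ.injective he))
        by_contra hc
        have : σ j < σ i := lt_of_le_of_ne (not_lt.mp hc) (Ne.symm hne2)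
        have := this
        have h2 : σ₀ j < σ₀ i := (hcon j i h1).mp this
        exact absurd h (not_lt.mpr h2.le)
    have hmono : StrictMono (σ ∘ σ₀.symm) := by
      intro a b hab
      apply hall
      simpa using hab
    have hrange : Set.range (σ ∘ σ₀.symm) = Set.range (id : Fin k → Fin k) := by
      simp [Set.range_comp, σ₀.symm.surjective.range_eq, σ.surjective.range_eq]
    have inst : WellFoundedLT (Fin k) := inferInstance
    have hid : (σ ∘ σ₀.symm) = id :=
      Set.range_injOn_strictMono (β := Fin k) (γ := Fin k) hmono strictMono_id hrange
    ext x
    have h5 := congrFun hid (σ₀ x)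
    simp only [Function.comp_apply, Equiv.symm_apply_apply, id_eq] at h5
    exact congrArg Fin.val h5
  obtain ⟨i, j, hij, hdis⟩ := hex
  apply Finset.sum_lt_sum
  · intro q hq
    have hq12 : q.1 ≠ q.2 := ne_of_lt (Finset.mem_filter.mp hq).2
    have hp := hrange q.1 q.2
    obtain ⟨hp0, hp1⟩ := hp
    by_cases h0 : σ₀ q.1 < σ₀ q.2
    · have : 1 / 2 < p q.1 q.2 := (hiff q.1 q.2 hq12).mp h0
      rw [if_pos h0]; split_ifs <;> linarith
    · have h2 : ¬ (1 / 2 < p q.1 q.2) := fun h => h0 ((hiff q.1 q.2 hq12).mpr h)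
      have : p q.1 q.2 < 1 / 2 := lt_of_le_of_ne (not_lt.mp h2) (hne q.1 q.2 hq12)
      rw [if_neg h0]; split_ifs <;> linarith
  · refine ⟨(i, j), ?_, ?_⟩
    · simp [hS, hij]
    · have hij' : i ≠ j := ne_of_lt hij
      obtain ⟨hp0, hp1⟩ := hrange i j
      by_cases h0 : σ₀ i < σ₀ j
      · have hA : ¬ (σ i < σ j) := fun h => hdis ⟨fun _ => h0, fun _ => h⟩
        have : 1 / 2 < p i j := (hiff i j hij').mp h0
        simp only [if_pos h0, if_neg hA]; linarith
      · have hA : σ i < σ j := by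
          by_contra hc
          exact hdis ⟨fun h => absurd h hc, fun h => absurd h h0⟩
        have h2 : ¬ (1 / 2 < p i j) := fun h => h0 ((hiff i j hij').mpr h)
        have : p i j < 1 / 2 := lt_of_le_of_ne (not_lt.mp h2) (hne i j hij')
        simp only [if_neg h0, if_pos hA]; linarith
end

section
/- Let m, m̂ : [k] → ℝ, let σ = argsort(m) and σ̂ = argsort(m̂) (both assumed well-defined, i.e., coordinates distinct). If |m(i) − m̂(i)| ≤ ε for all i ∈ [k], then for every i, |σ(i) − σ̂(i)| ≤ #{j ≠ i : |m(j) − m(i)| ≤ 2ε}. -/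
/-- The rank of element `i` when sorting the values of `m` in increasing order:
`argsort(m)(i) = 1 + #{j : m(j) < m(i)}`. -/
noncomputable def rankOf {k : ℕ} (m : Fin k → ℝ) (i : Fin k) : ℕ :=
  1 + (Finset.univ.filter (fun j => m j < m i)).card

/-- If `|m(i) − m̂(i)| ≤ ε` for all `i`, then the ranks of `m` and `m̂` differ
at each `i` by at most `#{j ≠ i : |m(j) − m(i)| ≤ 2ε}` (values assumed distinct). -/
theorem rank_stability {k : ℕ} (m mhat : Fin k → ℝ) (ε : ℝ)
    (hm : Function.Injective m) (hmhat : Function.Injective mhat)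
    (hclose : ∀ i, |m i - mhat i| ≤ ε) :
    ∀ i : Fin k, |(rankOf m i : ℤ) - (rankOf mhat i : ℤ)| ≤
      ((Finset.univ.filter (fun j => j ≠ i ∧ |m j - m i| ≤ 2 * ε)).card : ℤ) := by
  intro i
  set A := Finset.univ.filter (fun j => m j < m i) with hA
  set B := Finset.univ.filter (fun j => mhat j < mhat i) with hB
  set S := Finset.univ.filter (fun j : Fin k => j ≠ i ∧ |m j - m i| ≤ 2 * ε) with hS
  have hAB : A \ B ⊆ S := by
    intro j hj
    simp only [hA, hB, hS, Finset.mem_sdiff, Finset.mem_filter, Finset.mem_univ, true_and,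
      not_lt] at hj ⊢
    obtain ⟨h1, h2⟩ := hj
    have ci := hclose i
    have cj := hclose j
    rw [abs_le] at ci cj ⊢
    constructor
    · rintro rfl; exact lt_irrefl _ h1
    · constructor <;> nlinarith
  have hBA : B \ A ⊆ S := by
    intro j hj
    simp only [hA, hB, hS, Finset.mem_sdiff, Finset.mem_filter, Finset.mem_univ, true_and,
      not_lt] at hj ⊢
    obtain ⟨h1, h2⟩ := hj
    have ci := hclose i
    have cj := hclose j
    rw [abs_le] at ci cj ⊢
    constructor
    · rintro rfl; exact lt_irrefl _ h1
    · constructor <;> nlinarith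
  have hdisj : Disjoint (A \ B) (B \ A) := disjoint_sdiff_sdiff
  have hcard : (A \ B).card + (B \ A).card ≤ S.card := by
    rw [← Finset.card_union_of_disjoint hdisj]
    exact Finset.card_le_card (Finset.union_subset hAB hBA)
  have h1 : A.card = (A ∩ B).card + (A \ B).card :=
    (Finset.card_inter_add_card_sdiff A B).symm
  have h2 : B.card = (B ∩ A).card + (B \ A).card :=
    (Finset.card_inter_add_card_sdiff B A).symm
  have hint : (A ∩ B).card = (B ∩ A).card := by rw [Finset.inter_comm]
  simp only [rankOf]
  rw [abs_le]
  push_cast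
  rw [← hA, ← hB]
  omega
end
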